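/- arXiv:2104.03205 — 2 statements merged into one kernel-verified Lean document; each statement's English description precedes it below -/
import Mathlib

section
/- For the multinomial dimer model on a 4-cycle with vertices {1,2,3,4}, unit edge weights, and feasible densities α with α₁+α₃ = 1 = α₂+α₄, the exponential growth rate is σ(α) = h(α₁) + h(α₂), where h(p) = −p log p − (1−p) log(1−p). -/
/-! Since `P` factors, the objective splits into two copies of the problem
`sup_{a,c} t a + (1-t) c - log (e^a + e^c)`. Its value `t log t + (1-t) log (1-t)` is Jensen's
inequality for `log` at the points `e^a / t`, `e^c / (1-t)` with weights `t`, `1-t`, and it is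
attained at `a = log t`, `c = log (1-t)`. -/

open Real

lemma mul_add_mul_sub_log_exp_add_exp_le {t : ℝ} (ht₀ : 0 < t) (ht₁ : t < 1) (a c : ℝ) :
    t * a + (1 - t) * c - log (exp a + exp c) ≤ t * log t + (1 - t) * log (1 - t) := by
  have hs₀ : 0 < 1 - t := by linarith
  have jensen := strictConcaveOn_log_Ioi.concaveOn.2 (x := exp a / t) (y := exp c / (1 - t))
    (div_pos (exp_pos a) ht₀) (div_pos (exp_pos c) hs₀) ht₀.le hs₀.le (by ring)
  have hsum : t • (exp a / t) + (1 - t) • (exp c / (1 - t)) = exp a + exp c := by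
    simp only [smul_eq_mul]
    field_simp
  rw [hsum, smul_eq_mul, smul_eq_mul, log_div (exp_ne_zero a) ht₀.ne',
    log_div (exp_ne_zero c) hs₀.ne', log_exp, log_exp] at jensen
  linarith

lemma isGreatest_mul_add_mul_sub_log_exp_add_exp {t : ℝ} (ht₀ : 0 < t) (ht₁ : t < 1) :
    IsGreatest {y : ℝ | ∃ a c : ℝ, y = t * a + (1 - t) * c - log (exp a + exp c)}
      (t * log t + (1 - t) * log (1 - t)) := by
  refine ⟨⟨log t, log (1 - t), ?_⟩, ?_⟩
  · rw [exp_log ht₀, exp_log (by linarith), add_sub_cancel, log_one, sub_zero]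
  · rintro y ⟨a, c, rfl⟩
    exact mul_add_mul_sub_log_exp_add_exp_le ht₀ ht₁ a c

/-- for the multinomial dimer model on the 4-cycle with
P = (x₁+x₃)(x₂+x₄), feasible densities α₁+α₃ = 1 = α₂+α₄ with 0<α₁,α₂<1, the
growth rate is σ(α) = h(α₁)+h(α₂), i.e. S(α) = sup_X {−log P(e^X)+Σα_vX_v}
equals −(h(α₁)+h(α₂)) where h(p) = −p log p − (1−p) log(1−p). -/
theorem stmt6 (α₁ α₂ : ℝ) (h₁ : 0 < α₁) (h₁' : α₁ < 1) (h₂ : 0 < α₂) (h₂' : α₂ < 1) :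
    IsLUB {y : ℝ | ∃ a b c d : ℝ,
        y = -Real.log ((Real.exp a + Real.exp c) * (Real.exp b + Real.exp d))
          + α₁ * a + α₂ * b + (1 - α₁) * c + (1 - α₂) * d}
      (-((-(α₁ * Real.log α₁) - (1 - α₁) * Real.log (1 - α₁))
        + (-(α₂ * Real.log α₂) - (1 - α₂) * Real.log (1 - α₂)))) := by
  obtain ⟨⟨a, c, hac⟩, hub₁⟩ := isGreatest_mul_add_mul_sub_log_exp_add_exp h₁ h₁'
  obtain ⟨⟨b, d, hbd⟩, hub₂⟩ := isGreatest_mul_add_mul_sub_log_exp_add_exp h₂ h₂'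
  refine IsGreatest.isLUB ⟨⟨a, b, c, d, ?_⟩, ?_⟩
  · rw [log_mul (by positivity) (by positivity)]
    linarith
  · rintro y ⟨a, b, c, d, rfl⟩
    rw [log_mul (by positivity) (by positivity)]
    linarith [hub₁ ⟨a, c, rfl⟩, hub₂ ⟨b, d, rfl⟩]
end

section
/- The Mittag-Leffler expansion: for all real z ≠ 0, π·coth(πz) = 1/z + 2·Σ_{n=1}^∞ z/(z² + n²). -/
/-! Substitute `x = z * I` into Mathlib's Mittag-Leffler expansion of `π cot (π x)`:
`cot (y * I) = -I * coth y`, and the `n`-th pair of terms `1/(x - n) + 1/(x + n)` becomes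
`-2 I z / (z² + n²)`. -/

open Real

namespace Complex

lemma mem_integerComplement_of_im_ne_zero {x : ℂ} (hx : x.im ≠ 0) : x ∈ integerComplement := by
  rintro ⟨n, rfl⟩
  simp at hx

lemma cot_mul_I (x : ℂ) : cot (x * I) = -I * (cosh x / sinh x) := by
  rw [cot_eq_cos_div_sin, cos_mul_I, sin_mul_I, div_mul_eq_div_div, div_I]
  ring

end Complex

open Complex in
lemma cotTerm_ofReal_mul_I (z : ℝ) (n : ℕ) :
    cotTerm (z * I) n = -2 * I * ((z / (z ^ 2 + ((n : ℝ) + 1) ^ 2) : ℝ) : ℂ) := by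
  have hm : (0 : ℝ) < n + 1 := by positivity
  have hsub : (z : ℂ) * I - (n + 1) ≠ 0 := fun h => by
    have := congrArg re h; simp at this; linarith
  have hadd : (z : ℂ) * I + (n + 1) ≠ 0 := fun h => by
    have := congrArg re h; simp at this; linarith
  have hden : ((z : ℂ) ^ 2 + ((n : ℂ) + 1) ^ 2) ≠ 0 := by
    exact_mod_cast (by positivity : z ^ 2 + ((n : ℝ) + 1) ^ 2 ≠ 0)
  push_cast
  field_simp
  linear_combination (2 * z ^ 3 * I : ℂ) * I_sq

open Complex in
theorem Real.hasSum_div_sq_add_succ_sq {z : ℝ} (hz : z ≠ 0) :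
    HasSum (fun n : ℕ ↦ z / (z ^ 2 + ((n : ℝ) + 1) ^ 2))
      ((π * (Real.cosh (π * z) / Real.sinh (π * z)) - 1 / z) / 2) := by
  have hx : (z : ℂ) * I ∈ integerComplement :=
    mem_integerComplement_of_im_ne_zero (by simpa using hz)
  have h := (summable_cotTerm hx).hasSum
  rw [← cot_series_rep' hx] at h
  simp_rw [cotTerm_ofReal_mul_I] at h
  have hterm : ∀ w : ℂ, I / 2 * (-2 * I * w) = w := fun w => by
    linear_combination (-w) * I_sq
  have hval : I / 2 * ((π : ℂ) * Complex.cot (π * (z * I)) - 1 / (z * I))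
      = (((π * (Real.cosh (π * z) / Real.sinh (π * z)) - 1 / z) / 2 : ℝ) : ℂ) := by
    rw [← mul_assoc, cot_mul_I]
    have hz' : (z : ℂ) ≠ 0 := ofReal_ne_zero.mpr hz
    push_cast
    field_simp
    linear_combination (-(π * z * Complex.cosh (π * z) / Complex.sinh (π * z))) * I_sq
  have h' := h.mul_left (I / 2)
  simp only [hterm] at h'
  rw [hval] at h'
  exact hasSum_ofReal.mp h'

/-- Mittag-Leffler expansion: for real z ≠ 0,
π coth(πz) = 1/z + 2 Σ_{n≥1} z/(z²+n²). -/
theorem stmt17 (z : ℝ) (hz : z ≠ 0) :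
    Real.pi * (Real.cosh (Real.pi * z) / Real.sinh (Real.pi * z))
      = 1 / z + 2 * ∑' n : ℕ, z / (z ^ 2 + ((n : ℝ) + 1) ^ 2) := by
  rw [(Real.hasSum_div_sq_add_succ_sq hz).tsum_eq]
  ring
end
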